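/- arXiv:2602.13679 — 2 statements merged into one kernel-verified Lean document; each statement's English description precedes it below -/
import Mathlib

section
/- For all r ≥ 0 and t > 0 and a > 0, with φ₊ = max(φ, 0) for an increasing function φ : (0,∞) → ℝ with increasing inverse φ₊^{-1} on [0,∞): r t − t √(a φ₊^{-1}(t)) ≤ r φ₊(r²/a). -/
/-! If `t ≤ φ₊(r²/a)` the subtracted term is nonnegative and `r t ≤ r φ₊(r²/a)`. Otherwise
`φ(r²/a) < t`, so `r²/a ≤ φ₊⁻¹(t)`, i.e. `r ≤ √(a φ₊⁻¹(t))`, and the left side is `≤ 0`. -/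

theorem mul_sub_le_mul_of_lt_imp_le {r t s u : ℝ} (hr : 0 ≤ r) (ht : 0 ≤ t) (hs : 0 ≤ s)
    (hu : 0 ≤ u) (h : s < t → r ≤ u) : t * (r - u) ≤ r * s := by
  rcases le_or_gt t s with hts | hst
  · calc t * (r - u) ≤ t * r := by nlinarith
      _ ≤ r * s := by nlinarith
  · calc t * (r - u) ≤ 0 := mul_nonpos_of_nonneg_of_nonpos ht (by linarith [h hst])
      _ ≤ r * s := mul_nonneg hr hs

theorem le_sqrt_mul_of_sq_div_le {r a x : ℝ} (ha : 0 < a) (h : r ^ 2 / a ≤ x) :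
    r ≤ √(a * x) :=
  Real.le_sqrt_of_sq_le ((div_le_iff₀' ha).mp h)

theorem young_type_inequality_general
    (φ φinv : ℝ → ℝ)
    (hinv_mono : ∀ x, 0 < x → ∀ t, 0 ≤ t → φ x ≤ t → x ≤ φinv t)
    (r t a : ℝ) (hr : 0 ≤ r) (ht : 0 < t) (ha : 0 < a) :
    r * t - t * Real.sqrt (a * φinv t) ≤ r * max (φ (r ^ 2 / a)) 0 := by
  have h_above_threshold : max (φ (r ^ 2 / a)) 0 < t → r ≤ √(a * φinv t) := by
    intro hlt
    rcases hr.eq_or_lt with rfl | hr_pos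
    · exact Real.sqrt_nonneg _
    · exact le_sqrt_mul_of_sq_div_le ha <|
        hinv_mono _ (by positivity) t ht.le ((le_max_left _ _).trans hlt.le)
  have key := mul_sub_le_mul_of_lt_imp_le hr ht.le (le_max_right _ 0) (Real.sqrt_nonneg _)
    h_above_threshold
  linarith

/-- Elementary inequality rt − t√(a·φ₊⁻¹(t)) ≤ r·φ₊(r²/a) used in the proof of
Proposition 3.3(i). -/
theorem young_type_inequality
    (φ φinv : ℝ → ℝ)
    (hφ : StrictMonoOn φ (Set.Ioi 0))
    (hinv_pos : ∀ t, 0 ≤ t → 0 < φinv t)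
    (hinv : ∀ t, 0 ≤ t → φ (φinv t) = t)
    (hinv_mono : ∀ x, 0 < x → ∀ t, 0 ≤ t → φ x ≤ t → x ≤ φinv t)
    (r t a : ℝ) (hr : 0 ≤ r) (ht : 0 < t) (ha : 0 < a) :
    r * t - t * Real.sqrt (a * φinv t) ≤ r * max (φ (r ^ 2 / a)) 0 :=
  young_type_inequality_general φ φinv hinv_mono r t a hr ht ha
end

section
/- Let μ be a probability measure and f measurable with ∫ f² dμ = 1 and ∫ f dμ ≥ 0. Then ∫ (|f| − 1)² dμ ≤ 2 Var_μ(f). -/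
open MeasureTheory ProbabilityTheory

/-!
Write `a = ∫ |f|` and `m = ∫ f`. Expanding the square, `∫ (|f| - 1)² = 2 - 2a` while
`2 Var(f) = 2 - 2m²`, so the claim is `m² ≤ a`. Cauchy–Schwarz gives `a² ≤ ∫ f² = 1`, hence
`0 ≤ m ≤ a ≤ 1` and `m² ≤ m ≤ a`.
-/

lemma sq_integral_le_integral_sq {Ω : Type*} [MeasurableSpace Ω] {μ : Measure Ω}
    [IsProbabilityMeasure μ] {g : Ω → ℝ} (hg : MemLp g 2 μ) :
    (∫ ω, g ω ∂μ) ^ 2 ≤ ∫ ω, g ω ^ 2 ∂μ := by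
  have h := variance_nonneg g μ
  rw [variance_eq_sub hg] at h
  simpa only [Pi.pow_apply, sub_nonneg] using h

lemma integral_abs_sub_one_sq {Ω : Type*} [MeasurableSpace Ω] {μ : Measure Ω}
    [IsFiniteMeasure μ] {f : Ω → ℝ} (hf : Integrable f μ)
    (hf_sq : Integrable (fun ω => f ω ^ 2) μ) :
    ∫ ω, (|f ω| - 1) ^ 2 ∂μ = ∫ ω, f ω ^ 2 ∂μ - 2 * ∫ ω, |f ω| ∂μ + μ.real Set.univ := by
  have hexpand : ∀ ω, (|f ω| - 1) ^ 2 = f ω ^ 2 - 2 * |f ω| + 1 := fun ω => by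
    rw [sub_sq, sq_abs]; ring
  have h2abs : Integrable (fun ω => 2 * |f ω|) μ := hf.abs.const_mul 2
  have hdiff : Integrable (fun ω => f ω ^ 2 - 2 * |f ω|) μ := hf_sq.sub h2abs
  simp_rw [hexpand]
  rw [integral_add hdiff (integrable_const 1), integral_sub hf_sq h2abs,
    integral_const_mul, integral_const, smul_eq_mul, mul_one]

theorem abs_minus_one_sq_le_two_var_general
    {Ω : Type*} [MeasurableSpace Ω] (μ : Measure Ω) [IsProbabilityMeasure μ]
    (f : Ω → ℝ)
    (hint1 : Integrable f μ)
    (hint2 : Integrable (fun ω => f ω ^ 2) μ)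
    (hnorm : ∫ ω, f ω ^ 2 ∂μ = 1)
    (hmean : 0 ≤ ∫ ω, f ω ∂μ) :
    ∫ ω, (|f ω| - 1) ^ 2 ∂μ ≤ 2 * ((∫ ω, f ω ^ 2 ∂μ) - (∫ ω, f ω ∂μ) ^ 2) := by
  have hL2 : MemLp f 2 μ := (memLp_two_iff_integrable_sq hint1.aestronglyMeasurable).2 hint2
  have habs_sq_le : (∫ ω, |f ω| ∂μ) ^ 2 ≤ 1 := by
    simpa only [sq_abs, hnorm] using sq_integral_le_integral_sq (g := fun ω => |f ω|) hL2.abs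
  have habs_le_one : ∫ ω, |f ω| ∂μ ≤ 1 :=
    (sq_le_one_iff₀ (integral_nonneg fun ω => abs_nonneg (f ω))).1 habs_sq_le
  have hmean_le : ∫ ω, f ω ∂μ ≤ ∫ ω, |f ω| ∂μ :=
    (le_abs_self _).trans abs_integral_le_integral_abs
  rw [integral_abs_sub_one_sq hint1 hint2, hnorm, probReal_univ]
  nlinarith

/-- If ∫ f² dμ = 1 and ∫ f dμ ≥ 0 then ∫ (|f|−1)² dμ ≤ 2 Var_μ(f). -/
theorem abs_minus_one_sq_le_two_var
    {Ω : Type*} [MeasurableSpace Ω] (μ : Measure Ω) [IsProbabilityMeasure μ]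
    (f : Ω → ℝ) (hf : Measurable f)
    (hint1 : Integrable f μ)
    (hint2 : Integrable (fun ω => f ω ^ 2) μ)
    (hnorm : ∫ ω, f ω ^ 2 ∂μ = 1)
    (hmean : 0 ≤ ∫ ω, f ω ∂μ) :
    ∫ ω, (|f ω| - 1) ^ 2 ∂μ ≤ 2 * ((∫ ω, f ω ^ 2 ∂μ) - (∫ ω, f ω ∂μ) ^ 2) :=
  abs_minus_one_sq_le_two_var_general μ f hint1 hint2 hnorm hmean
end
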